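/- Fix a prime p and an integer k ≥ 1. For primes l₁ < l₂ < ... < l_m < l₀ and positive integers α₁,...,α_m with ∑α_i = n, let t be uniform on an integer interval of length f. Then E[∏_{i=1}^m (log v_{l_i,k}(t²−4p))^{α_i}] = E[∏_{i=1}^m (log Y_{l_i})^{α_i}] + O(Cⁿ l₀^{2kn} / f), where the Y_{l_i} are independent random variables with Y_{l_i} distributed as v_{l_i,k}(t²−4p) for t uniform mod l_i^{2k}, and C is an absolute constant. -/

import Mathlib

/-- largest δ with l^(2δ) ∣ Δ (for l = 2, with the extra condition Δ/4^δ ≡ 0,1 mod 4) -/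
noncomputable def gdelta (l : ℕ) (Δ : ℤ) : ℕ :=
  if l = 2 then sSup {δ : ℕ | (4:ℤ)^δ ∣ Δ ∧ (Δ / 4^δ % 4 = 0 ∨ Δ / 4^δ % 4 = 1)}
  else sSup {δ : ℕ | (l:ℤ)^(2*δ) ∣ Δ}

/-- Kronecker symbol (m / l) for a prime l: for odd l the Jacobi (Legendre) symbol, and for
l = 2 determined by m mod 8 (where m ≡ 0, 1 mod 4). -/
noncomputable def kron (l : ℕ) (m : ℤ) : ℤ :=
  if l = 2 then (if m % 8 = 1 then 1 else if m % 8 = 5 then -1 else 0)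
  else jacobiSym m l

/-- Gekeler's local weight v_l(Δ): with δ = gdelta l Δ, it is
(1 − l⁻²)⁻¹ (1 + l⁻¹ + c) where c = 0, −(l+1)l^(−δ−2), −2l^(−δ−1) according as the
Kronecker symbol (Δ/l^(2δ) over l) is +1, 0, −1. -/
noncomputable def gv (l : ℕ) (Δ : ℤ) : ℝ :=
  (1 - ((l:ℝ)⁻¹)^2)⁻¹ * (1 + (l:ℝ)⁻¹ +
    (if kron l (Δ / (l:ℤ)^(2 * gdelta l Δ)) = 1 then 0
     else if kron l (Δ / (l:ℤ)^(2 * gdelta l Δ)) = 0 then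
       -((l:ℝ)+1) * ((l:ℝ)⁻¹)^(gdelta l Δ + 2)
     else -2 * ((l:ℝ)⁻¹)^(gdelta l Δ + 1)))

/-- Truncated weight v_{l,k}(Δ): equals v_l(Δ) unless l^(2k) ∣ Δ, in which case it is
(1 − l⁻²)⁻¹ (1 + l⁻¹). -/
noncomputable def gvk (l k : ℕ) (Δ : ℤ) : ℝ :=
  if ((l:ℤ))^(2*k) ∣ Δ then (1 - ((l:ℝ)⁻¹)^2)⁻¹ * (1 + (l:ℝ)⁻¹) else gv l Δ

/-!
Put `T = ∏ lᵢ ^ (2k)`. The factor `t ↦ log v_{l,k}(t² - 4p)` is `l ^ (2k)`-periodic: when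
`l ^ (2k) ∤ Δ`, the exponent `δ < k` and the Kronecker symbol in `v_l(Δ)` only see `Δ` modulo
`l ^ (2k)` (modulo `2 ^ (2k + 1)` if `l = 2`, and `(t + 4 ^ k)² ≡ t² mod 2 ^ (2k + 1)`). Hence the
integrand is `T`-periodic, and by the Chinese remainder theorem its mean over a period is the
product of the local means. Over an interval of length `f` the mean of a `T`-periodic function
bounded by `B` differs from its mean over a period by at most `B T / f`. Finally
`1/2 ≤ v_{l,k} ≤ 2` bounds the integrand by `1`, and `T ≤ l₀ ^ (2kn)`, so `C = 1` works.
-/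

open Finset Function

theorem Function.Periodic.map_cast_intCast {α : Type*} {φ : ℤ → α} {N : ℕ} (h : Periodic φ N)
    (t : ℤ) : φ ((t : ZMod N).cast) = φ t := by
  rw [ZMod.coe_intCast, Int.emod_def, mul_comm]
  exact h.sub_int_mul_eq _

theorem Function.Periodic.natCast_of_dvd {α : Type*} {φ : ℤ → α} {N K : ℕ} (h : Periodic φ N)
    (hNK : N ∣ K) : Periodic φ K := by
  obtain ⟨c, rfl⟩ := hNK
  simpa [mul_comm] using h.nat_mul c

section PeriodicSums

variable {M : Type*} [AddCommMonoid M]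

theorem ZMod.sum_range_natCast {N : ℕ} [NeZero N] (g : ZMod N → M) :
    ∑ t ∈ range N, g t = ∑ x, g x :=
  sum_nbij' Nat.cast ZMod.val (by simp) (fun x _ => mem_range.2 x.val_lt)
    (fun t ht => by simp [ZMod.val_natCast, Nat.mod_eq_of_lt (mem_range.1 ht)])
    (fun x _ => by simp) (fun _ _ => rfl)

theorem Finset.sum_Ico_add_natCast (a : ℤ) (f : ℕ) (φ : ℤ → M) :
    ∑ t ∈ Ico a (a + f), φ t = ∑ s ∈ range f, φ (a + s) := by
  rw [Int.Ico_eq_finset_map, sum_map]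
  simp

variable {φ : ℤ → M} {N : ℕ}

theorem Function.Periodic.sum_range_add_eq_sum_zmod [NeZero N] (h : Periodic φ N) (b : ℤ) :
    ∑ s ∈ range N, φ (b + s) = ∑ x : ZMod N, φ x.cast := by
  calc ∑ s ∈ range N, φ (b + s) = ∑ s ∈ range N, φ (((b : ZMod N) + (s : ZMod N)).cast) := by
        refine sum_congr rfl fun s _ => ?_
        rw [← h.map_cast_intCast]
        push_cast
        rfl
    _ = ∑ x : ZMod N, φ x.cast :=
        (ZMod.sum_range_natCast _).trans
          (Equiv.sum_comp (Equiv.addLeft (b : ZMod N)) fun x => φ x.cast)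

theorem Function.Periodic.sum_range_add_eq_sum_range [NeZero N] (h : Periodic φ N) (b : ℤ) :
    ∑ s ∈ range N, φ (b + s) = ∑ s ∈ range N, φ s := by
  simpa using (h.sum_range_add_eq_sum_zmod b).trans (h.sum_range_add_eq_sum_zmod 0).symm

theorem Function.Periodic.sum_range_mul_add [NeZero N] (h : Periodic φ N) (b : ℤ) (q : ℕ) :
    ∑ s ∈ range (q * N), φ (b + s) = q • ∑ s ∈ range N, φ s := by
  induction q with
  | zero => simp
  | succ q ih =>
    rw [Nat.succ_mul, Finset.sum_range_add, ih, succ_nsmul,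
      ← h.sum_range_add_eq_sum_range (b + (q * N : ℕ))]
    push_cast
    simp only [add_assoc]

end PeriodicSums

theorem abs_sum_range_le {g : ℕ → ℝ} {B : ℝ} (hg : ∀ s, |g s| ≤ B) (n : ℕ) :
    |∑ s ∈ range n, g s| ≤ n * B :=
  (abs_sum_le_sum_abs _ _).trans (by simpa using sum_le_sum fun s (_ : s ∈ range n) => hg s)

theorem Function.Periodic.abs_sum_Ico_div_sub_sum_range_div_le {φ : ℤ → ℝ} {N : ℕ} [NeZero N]
    (h : Periodic φ N) {B : ℝ} (hB : ∀ t, |φ t| ≤ B) (a : ℤ) {f : ℕ} (hf : 0 < f) :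
    |(∑ t ∈ Ico a (a + f), φ t) / f - (∑ t ∈ range N, φ t) / N| ≤ B * N / f := by
  set S := ∑ t ∈ range N, φ t
  obtain ⟨q, r, hr, rfl⟩ : ∃ q r, r < N ∧ f = q * N + r :=
    ⟨f / N, f % N, Nat.mod_lt _ (NeZero.pos N), (Nat.div_add_mod' f N).symm⟩
  set b : ℤ := a + (q * N : ℕ)
  set R := ∑ s ∈ range r, φ (b + s)
  set R' := ∑ s ∈ range (N - r), φ (b + (r + s : ℕ))
  have hsum : ∑ t ∈ Ico a (a + (q * N + r : ℕ)), φ t = q * S + R := by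
    rw [sum_Ico_add_natCast, Finset.sum_range_add, h.sum_range_mul_add, nsmul_eq_mul]
    simp only [Nat.cast_add, add_assoc, b, R]
    rfl
  have hS : S = R + R' := by
    change ∑ t ∈ range N, φ t = R + R'
    rw [← h.sum_range_add_eq_sum_range b]
    conv_lhs => rw [← Nat.add_sub_cancel' hr.le]
    rw [Finset.sum_range_add]
  have hR : |R| ≤ r * B := abs_sum_range_le (fun s => hB _) r
  have hR' : |R'| ≤ (N - r : ℕ) * B := abs_sum_range_le (fun s => hB _) (N - r)
  have hB0 : 0 ≤ B := (abs_nonneg _).trans (hB 0)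
  have hN : (0 : ℝ) < N := by exact_mod_cast NeZero.pos N
  have hf' : (0 : ℝ) < (q * N + r : ℕ) := by exact_mod_cast hf
  rw [Nat.cast_sub hr.le] at hR'
  have hrN : (r : ℝ) ≤ N := by exact_mod_cast hr.le
  have key : (q * S + R) / (q * N + r : ℕ) - S / N
      = ((N - r) * R - r * R') / ((q * N + r : ℕ) * N) := by
    rw [hS]; field_simp; push_cast; ring
  rw [hsum, key, abs_div, abs_of_pos (mul_pos hf' hN), div_le_div_iff₀ (mul_pos hf' hN) hf']
  have : |(N - r) * R - r * R'| ≤ B * N * N := by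
    calc |(N - r) * R - r * R'| ≤ (N - r) * |R| + r * |R'| := by
          refine (abs_sub _ _).trans ?_
          rw [abs_mul, abs_mul, abs_of_nonneg (sub_nonneg.2 hrN), Nat.abs_cast]
      _ ≤ (N - r) * (r * B) + r * ((N - r) * B) := by gcongr
      _ = 2 * r * (N - r) * B := by ring
      _ ≤ B * N * N := by
          nlinarith [mul_nonneg hB0 (add_nonneg (sq_nonneg ((N : ℝ) - r)) (sq_nonneg (r : ℝ)))]
  calc |(N - r) * R - r * R'| * (q * N + r : ℕ) ≤ B * N * N * (q * N + r : ℕ) := by gcongr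
    _ = B * N * ((q * N + r : ℕ) * N) := by ring

theorem sum_range_prod_eq_prod_sum_range {ι R : Type*} [Fintype ι] [DecidableEq ι]
    [CommSemiring R] {N : ι → ℕ} [∀ i, NeZero (N i)] (hN : Pairwise (Nat.Coprime on N))
    {F : ι → ℤ → R} (hF : ∀ i, Periodic (F i) (N i)) :
    ∑ t ∈ range (∏ i, N i), ∏ i, F i t = ∏ i, ∑ t ∈ range (N i), F i t := by
  have : NeZero (∏ i, N i) := ⟨prod_ne_zero_iff.2 fun i _ => NeZero.ne _⟩
  calc ∑ t ∈ range (∏ i, N i), ∏ i, F i t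
      = ∑ y : ZMod (∏ i, N i), ∏ i, F i (ZMod.prodEquivPi N hN y i).cast := by
        rw [← ZMod.sum_range_natCast]
        refine sum_congr rfl fun t _ => prod_congr rfl fun i _ => ?_
        rw [ZMod.prodEquivPi_apply, map_natCast, ← (hF i).map_cast_intCast, Int.cast_natCast]
    _ = ∑ z : (∀ i, ZMod (N i)), ∏ i, F i (z i).cast :=
        Equiv.sum_comp (ZMod.prodEquivPi N hN).toEquiv fun z => ∏ i, F i (z i).cast
    _ = ∏ i, ∑ x : ZMod (N i), F i x.cast :=
        (Fintype.prod_sum fun i (x : ZMod (N i)) => F i x.cast).symm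
    _ = ∏ i, ∑ t ∈ range (N i), F i t :=
        prod_congr rfl fun i _ => by simpa using ((hF i).sum_range_add_eq_sum_zmod 0).symm

theorem Int.ModEq.ediv {a b d m : ℤ} (h : a ≡ b [ZMOD d * m]) : a / d ≡ b / d [ZMOD m] := by
  rcases eq_or_ne d 0 with rfl | hd
  · simp [Int.ModEq]
  obtain ⟨c, hc⟩ := h.dvd
  rw [show b = a + m * c * d by linear_combination hc, Int.add_mul_ediv_right _ _ hd]
  exact Int.modEq_iff_dvd.2 ⟨c, by ring⟩

theorem lt_of_pow_dvd_of_not_pow_dvd {α : Type*} [Monoid α] {a b : α} {m n : ℕ}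
    (hm : a ^ m ∣ b) (hn : ¬ a ^ n ∣ b) : m < n :=
  lt_of_not_ge fun h => hn ((pow_dvd_pow a h).trans hm)

section Weights

variable {l k : ℕ} {Δ Δ' : ℤ}

theorem gdelta_lt (hΔ : ¬ (l : ℤ) ^ (2 * k) ∣ Δ) : gdelta l Δ < k := by
  have hk : k ≠ 0 := by rintro rfl; simp at hΔ
  have hle : ∀ δ, (l : ℤ) ^ (2 * δ) ∣ Δ → δ ≤ k - 1 := fun δ hδ => by
    have := lt_of_pow_dvd_of_not_pow_dvd hδ hΔ; omega
  refine lt_of_le_of_lt ?_ (Nat.sub_one_lt hk)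
  unfold gdelta
  split_ifs with hl
  · subst hl
    exact csSup_le' fun δ hδ => hle δ (by simpa [pow_mul] using hδ.1)
  · exact csSup_le' fun δ hδ => hle δ hδ

theorem gdelta_eq_of_modEq (hΔ : ¬ (l : ℤ) ^ (2 * k) ∣ Δ)
    (h : Δ ≡ Δ' [ZMOD (l : ℤ) ^ (2 * k)]) : gdelta l Δ = gdelta l Δ' := by
  have hΔ' : ¬ (l : ℤ) ^ (2 * k) ∣ Δ' := mt h.dvd_iff.2 hΔ
  -- every admissible `δ` is `< k`, and below `k` admissibility only depends on `Δ mod l ^ (2k)`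
  have hlt : ∀ {D : ℤ}, ¬ (l : ℤ) ^ (2 * k) ∣ D → ∀ δ, (l : ℤ) ^ (2 * δ) ∣ D → δ < k :=
    fun hD δ hδ => by have := lt_of_pow_dvd_of_not_pow_dvd hδ hD; omega
  unfold gdelta
  split_ifs with hl
  · subst hl
    push_cast at hlt hΔ hΔ' h
    congr 1
    ext δ
    by_cases hδ : δ < k
    · have h' : Δ ≡ Δ' [ZMOD 4 ^ δ * 4] :=
        h.of_dvd (by rw [← pow_succ, show (4 : ℤ) = 2 ^ 2 by norm_num, ← pow_mul]
                     exact pow_dvd_pow _ (by omega))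
      simp only [Set.mem_ofPred_eq, (h'.of_mul_right 4).dvd_iff,
        show Δ / 4 ^ δ % 4 = Δ' / 4 ^ δ % 4 from h'.ediv]
    · exact iff_of_false (fun hd => hδ (hlt hΔ δ (by simpa [pow_mul] using hd.1)))
        (fun hd => hδ (hlt hΔ' δ (by simpa [pow_mul] using hd.1)))
  · congr 1
    ext δ
    by_cases hδ : δ < k
    · exact (h.of_dvd (pow_dvd_pow _ (by omega))).dvd_iff
    · exact iff_of_false (fun hd => hδ (hlt hΔ δ hd)) (fun hd => hδ (hlt hΔ' δ hd))

theorem kron_eq_of_modEq_of_ne_two (hl : l ≠ 2) {a b : ℤ} (h : a ≡ b [ZMOD l]) :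
    kron l a = kron l b := by
  simp only [kron, if_neg hl]
  exact jacobiSym.mod_left' h

theorem kron_two_eq_of_modEq {a b : ℤ} (h : a ≡ b [ZMOD 8]) : kron 2 a = kron 2 b := by
  rw [kron, kron, if_pos rfl, if_pos rfl, show a % 8 = b % 8 from h]

theorem gv_eq_of_modEq_of_ne_two (hl : l ≠ 2) (hΔ : ¬ (l : ℤ) ^ (2 * k) ∣ Δ)
    (h : Δ ≡ Δ' [ZMOD (l : ℤ) ^ (2 * k)]) : gv l Δ = gv l Δ' := by
  have hlt := gdelta_lt hΔ
  have hkron : kron l (Δ / (l : ℤ) ^ (2 * gdelta l Δ)) = kron l (Δ' / (l : ℤ) ^ (2 * gdelta l Δ)) :=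
    kron_eq_of_modEq_of_ne_two hl <| Int.ModEq.ediv <| h.of_dvd <| by
      rw [← pow_succ]; exact pow_dvd_pow _ (by omega)
  simp only [gv, ← gdelta_eq_of_modEq hΔ h, hkron]

theorem gv_two_eq_of_modEq (hΔ : ¬ (2 : ℤ) ^ (2 * k) ∣ Δ) (h : Δ ≡ Δ' [ZMOD 2 ^ (2 * k + 1)]) :
    gv 2 Δ = gv 2 Δ' := by
  have hΔ2 : ¬ ((2 : ℕ) : ℤ) ^ (2 * k) ∣ Δ := by exact_mod_cast hΔ
  have hlt := gdelta_lt hΔ2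
  have hkron : kron 2 (Δ / (2 : ℤ) ^ (2 * gdelta 2 Δ)) = kron 2 (Δ' / (2 : ℤ) ^ (2 * gdelta 2 Δ)) :=
    kron_two_eq_of_modEq <| Int.ModEq.ediv <| h.of_dvd <| by
      rw [show (8 : ℤ) = 2 ^ 3 by norm_num, ← pow_add]; exact pow_dvd_pow _ (by omega)
  have hδ := gdelta_eq_of_modEq hΔ2 (by exact_mod_cast h.of_dvd (pow_dvd_pow 2 (Nat.le_succ _)))
  simp only [gv, ← hδ, Nat.cast_ofNat, hkron]

theorem gvk_eq_of_modEq_of_ne_two (hl : l ≠ 2) (h : Δ ≡ Δ' [ZMOD (l : ℤ) ^ (2 * k)]) :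
    gvk l k Δ = gvk l k Δ' := by
  by_cases hΔ : (l : ℤ) ^ (2 * k) ∣ Δ
  · simp only [gvk, if_pos hΔ, if_pos (h.dvd_iff.1 hΔ)]
  · simp only [gvk, if_neg hΔ, if_neg (mt h.dvd_iff.2 hΔ), gv_eq_of_modEq_of_ne_two hl hΔ h]

theorem gvk_two_eq_of_modEq (h : Δ ≡ Δ' [ZMOD 2 ^ (2 * k + 1)]) : gvk 2 k Δ = gvk 2 k Δ' := by
  have h' : Δ ≡ Δ' [ZMOD 2 ^ (2 * k)] := h.of_dvd (pow_dvd_pow 2 (Nat.le_succ _))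
  by_cases hΔ : (2 : ℤ) ^ (2 * k) ∣ Δ
  · simp only [gvk, Nat.cast_ofNat, if_pos hΔ, if_pos (h'.dvd_iff.1 hΔ)]
  · simp only [gvk, Nat.cast_ofNat, if_neg hΔ, if_neg (mt h'.dvd_iff.2 hΔ),
      gv_two_eq_of_modEq hΔ h]

theorem gvk_sq_sub_periodic (hk : 1 ≤ k) (c : ℤ) :
    Periodic (fun t : ℤ => gvk l k (t ^ 2 - c)) (l ^ (2 * k) : ℕ) := by
  intro t
  push_cast
  obtain rfl | hl := eq_or_ne l 2
  · -- `(t + 4 ^ k) ^ 2 - t ^ 2 = 2 ^ (2k + 1) (t + 2 ^ (2k - 1))` needs `k ≥ 1`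
    obtain ⟨j, rfl⟩ : ∃ j, k = j + 1 := ⟨k - 1, by omega⟩
    exact gvk_two_eq_of_modEq (Int.modEq_iff_dvd.2 ⟨t + 2 ^ (2 * j + 1), by ring⟩).symm
  · exact gvk_eq_of_modEq_of_ne_two hl (Int.modEq_iff_dvd.2 ⟨2 * t + l ^ (2 * k), by ring⟩).symm

theorem inv_one_sub_sq_mul_mem_Icc {x c : ℝ} (hx : 0 < x) (hx' : x ≤ 1 / 2) (hc : -(2 * x) ≤ c)
    (hc' : c ≤ 0) : (1 - x ^ 2)⁻¹ * (1 + x + c) ∈ Set.Icc (1 / 2 : ℝ) 2 := by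
  have : 0 < 1 - x ^ 2 := by nlinarith
  rw [← div_eq_inv_mul, Set.mem_Icc, le_div_iff₀ this, div_le_iff₀ this]
  constructor <;> nlinarith

theorem inv_natCast_le_half (hl : 2 ≤ l) : (l : ℝ)⁻¹ ≤ 1 / 2 := by
  rw [one_div]; exact inv_anti₀ two_pos (by exact_mod_cast hl)

theorem gv_mem_Icc (hl : 2 ≤ l) (Δ : ℤ) : gv l Δ ∈ Set.Icc (1 / 2 : ℝ) 2 := by
  set x := (l : ℝ)⁻¹
  have hx : 0 < x := by positivity
  have hx' : x ≤ 1 / 2 := inv_natCast_le_half hl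
  have hlx : (l : ℝ) * x = 1 := mul_inv_cancel₀ (by positivity)
  have hpow : ∀ n, x ^ (n + 1) ≤ x := fun n => pow_le_of_le_one hx.le (by linarith) n.succ_ne_zero
  have hpow2 : ∀ n, 0 ≤ x ^ n := fun n => pow_nonneg hx.le n
  unfold gv
  split_ifs
  · exact inv_one_sub_sq_mul_mem_Icc hx hx' (by linarith) le_rfl
  · have e : ((l : ℝ) + 1) * x ^ (gdelta l Δ + 2)
        = x ^ (gdelta l Δ + 1) + x ^ (gdelta l Δ + 2) := by
      rw [pow_succ x (gdelta l Δ + 1)]; linear_combination x ^ (gdelta l Δ + 1) * hlx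
    refine inv_one_sub_sq_mul_mem_Icc hx hx' ?_ ?_ <;>
      nlinarith [hpow (gdelta l Δ), hpow (gdelta l Δ + 1), hpow2 (gdelta l Δ + 2)]
  · exact inv_one_sub_sq_mul_mem_Icc hx hx' (by nlinarith [hpow (gdelta l Δ)])
      (by nlinarith [hpow2 (gdelta l Δ + 1)])

theorem gvk_mem_Icc (hl : 2 ≤ l) (k : ℕ) (Δ : ℤ) : gvk l k Δ ∈ Set.Icc (1 / 2 : ℝ) 2 := by
  unfold gvk
  split_ifs
  · have hx : 0 < (l : ℝ)⁻¹ := by positivity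
    simpa using inv_one_sub_sq_mul_mem_Icc hx (inv_natCast_le_half hl) (by linarith) le_rfl
  · exact gv_mem_Icc hl Δ

theorem abs_log_le_one_of_mem_Icc {y : ℝ} (hy : y ∈ Set.Icc (1 / 2 : ℝ) 2) :
    |Real.log y| ≤ 1 := by
  have h2 : Real.log 2 < 1 := Real.log_two_lt_d9.trans (by norm_num)
  have hlo := Real.log_le_log (by norm_num) hy.1
  have hhi := Real.log_le_log (by linarith [hy.1]) hy.2
  rw [one_div, Real.log_inv] at hlo
  exact abs_le.2 ⟨by linarith, by linarith⟩

end Weights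

/-- Moment comparison: for distinct primes l₁,...,l_m < l₀ and exponents α_i summing to n,
the expectation of ∏ (log v_{l_i,k}(t²−4p))^{α_i} over t uniform on an integer interval of
length f equals the product of the individual expectations (t uniform mod l_i^{2k}), up to
O(Cⁿ l₀^{2kn} / f) with an absolute constant C. -/
theorem stmt18 :
    ∃ C > (0:ℝ), ∀ (p : ℕ), p.Prime → ∀ (k : ℕ), 1 ≤ k →
    ∀ (m l₀ : ℕ) (l : Fin m → ℕ), (∀ i, (l i).Prime) → Function.Injective l →
    (∀ i, l i < l₀) →
    ∀ (α : Fin m → ℕ), (∀ i, 1 ≤ α i) →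
    ∀ (n : ℕ), n = ∑ i, α i →
    ∀ (a : ℤ) (f : ℕ), 0 < f →
      |(∑ t ∈ Finset.Ico a (a + (f:ℤ)),
            ∏ i, (Real.log (gvk (l i) k (t^2 - 4*p)))^(α i)) / f
        - ∏ i, ((∑ t ∈ Finset.range ((l i)^(2*k)),
            (Real.log (gvk (l i) k ((t:ℤ)^2 - 4*p)))^(α i)) / ((l i)^(2*k) : ℝ))|
      ≤ C^n * (l₀:ℝ)^(2*k*n) / f := by
  refine ⟨1, one_pos, fun p _ k hk m l₀ l hl hinj hlt α hα n hn a f hf => ?_⟩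
  set N : Fin m → ℕ := fun i => l i ^ (2 * k)
  set F : Fin m → ℤ → ℝ := fun i t => Real.log (gvk (l i) k (t ^ 2 - 4 * p)) ^ α i
  have : ∀ i, NeZero (N i) := fun i => ⟨pow_ne_zero _ (hl i).ne_zero⟩
  have : NeZero (∏ i, N i) := ⟨prod_ne_zero_iff.2 fun i _ => NeZero.ne _⟩
  have hF : ∀ i, Periodic (F i) (N i) := fun i =>
    (gvk_sq_sub_periodic (l := l i) hk (4 * p)).comp fun y => Real.log y ^ α i
  have hco : Pairwise (Nat.Coprime on N) := fun i j hij =>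
    Nat.Coprime.pow _ _ ((Nat.coprime_primes (hl i) (hl j)).2 (hinj.ne hij))
  have hG : Periodic (fun t => ∏ i, F i t) (∏ i, N i : ℕ) := fun t => by
    have := periodic_prod univ
      (fun i _ => (hF i).natCast_of_dvd (dvd_prod_of_mem N (mem_univ i))) t
    rwa [Finset.prod_apply, Finset.prod_apply] at this
  have hGB : ∀ t, |∏ i, F i t| ≤ 1 := fun t => by
    rw [abs_prod]
    exact prod_le_one (fun _ _ => abs_nonneg _) fun i _ => by
      rw [abs_pow]; exact pow_le_one₀ (abs_nonneg _)
        (abs_log_le_one_of_mem_Icc (gvk_mem_Icc (hl i).two_le k _))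
  have hT : ∏ i, N i ≤ ∏ i, (l₀ ^ (2 * k)) ^ α i := prod_le_prod' fun i _ =>
    (Nat.pow_le_pow_left (hlt i).le _).trans (Nat.le_self_pow (by have := hα i; omega) _)
  rw [prod_pow_eq_pow_sum, ← hn, ← pow_mul] at hT
  calc _ = |(∑ t ∈ Ico a (a + f), ∏ i, F i t) / f
          - (∑ t ∈ range (∏ i, N i), ∏ i, F i t) / (∏ i, N i : ℕ)| := by
        rw [sum_range_prod_eq_prod_sum_range hco hF, Nat.cast_prod, ← prod_div_distrib]
        simp only [F, N, Nat.cast_pow]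
    _ ≤ 1 * (∏ i, N i : ℕ) / f := hG.abs_sum_Ico_div_sub_sum_range_div_le hGB a hf
    _ ≤ 1 ^ n * (l₀ : ℝ) ^ (2 * k * n) / f := by rw [one_pow]; gcongr; exact_mod_cast hT
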